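/- Multiplicativity of the bicategorical trace: Let B be a bicategory with a shadow ⟦−⟧, let (M, M∨, η_M, ε_M) be a dual pair with M : R → S and (N, N∨, η_N, ε_N) a dual pair with N : S → T, and let f : Q ⊙ M → M ⊙ P and g : P ⊙ N → N ⊙ L be 2-cells (Q : R → R, P : S → S, L : T → T). Regard M ⊙ N as right dualizable with dual N∨ ⊙ M∨, with coevaluation U_R → M ⊙ M∨ → M ⊙ (N ⊙ N∨) ⊙ M∨ (given by η_M followed by whiskering with η_N) and evaluation (N∨ ⊙ M∨) ⊙ (M ⊙ N) → N∨ ⊙ N → U_T (given by whiskering with ε_M followed by ε_N). Then tr((id_M ⊙ g) ∘ (f ⊙ id_N)) = tr(g) ∘ tr(f) : ⟦Q⟧ → ⟦L⟧, where the left-hand trace is of the composite 2-cell Q ⊙ (M ⊙ N) → (M ⊙ N) ⊙ L with respect to this dual pair (associators inserted as needed). -/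

import Mathlib

open CategoryTheory Category Bicategory

universe w v u w' v' u' v₁ u₁ v₂ u₂

/-- The data of a candidate dual pair in a bicategory (horizontal composition written in
diagrammatic order): 1-cells `M : R ⟶ S` and `Mv : S ⟶ R` together with a coevaluation
`η : 𝟙 R ⟶ M ≫ Mv` and an evaluation `ε : Mv ≫ M ⟶ 𝟙 S`. -/
structure BicatDualData {B : Type u} [Bicategory.{w, v} B] (R S : B) where
  M : R ⟶ S
  Mv : S ⟶ R
  η : 𝟙 R ⟶ M ≫ Mv
  ε' : Mv ≫ M ⟶ 𝟙 S

/-- The two triangle identities, saying that `(M, Mv, η, ε)` is a dual pair, i.e. that `M`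
is right dualizable with right dual `Mv`. -/
def BicatDualData.IsDualPair {B : Type u} [Bicategory.{w, v} B] {R S : B}
    (D : BicatDualData R S) : Prop :=
  ((λ_ D.M).inv ≫ (D.η ▷ D.M) ≫ (α_ D.M D.Mv D.M).hom ≫ (D.M ◁ D.ε') ≫ (ρ_ D.M).hom
      = 𝟙 D.M) ∧
  ((ρ_ D.Mv).inv ≫ (D.Mv ◁ D.η) ≫ (α_ D.Mv D.M D.Mv).inv ≫ (D.ε' ▷ D.Mv) ≫ (λ_ D.Mv).hom
      = 𝟙 D.Mv)

/-- A shadow on a bicategory `B` with values in a category `V`: functors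
`⟦-⟧ : B(R,R) ⥤ V` for every 0-cell `R`, together with natural isomorphisms
`θ_{M,N} : ⟦M ≫ N⟧ ≅ ⟦N ≫ M⟧` satisfying the hexagon and unit axioms. -/
structure Shadow (B : Type u) [Bicategory.{w, v} B] (V : Type u₁) [Category.{v₁} V] where
  sh : ∀ R : B, (R ⟶ R) ⥤ V
  θ : ∀ {R S : B} (M : R ⟶ S) (N : S ⟶ R), (sh R).obj (M ≫ N) ≅ (sh S).obj (N ≫ M)
  θ_natural : ∀ {R S : B} {M M' : R ⟶ S} {N N' : S ⟶ R} (f : M ⟶ M') (g : N ⟶ N'),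
    (sh R).map (f ▷ N ≫ M' ◁ g) ≫ (θ M' N').hom
      = (θ M N).hom ≫ (sh S).map (g ▷ M ≫ N' ◁ f)
  hexagon : ∀ {R S T : B} (M : R ⟶ S) (N : S ⟶ T) (P : T ⟶ R),
    (θ (M ≫ N) P).hom ≫ (sh T).map (α_ P M N).inv
      = (sh R).map (α_ M N P).hom ≫ (θ M (N ≫ P)).hom ≫ (sh S).map (α_ N P M).hom ≫
          (θ N (P ≫ M)).hom
  unit_right : ∀ {R : B} (M : R ⟶ R),
    (θ M (𝟙 R)).hom ≫ (sh R).map (λ_ M).hom = (sh R).map (ρ_ M).hom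
  unit_left : ∀ {R : B} (M : R ⟶ R),
    (θ (𝟙 R) M).hom ≫ (sh R).map (ρ_ M).hom = (sh R).map (λ_ M).hom

/-- The bicategorical trace of a 2-cell `f : Q ≫ M ⟶ M ≫ P` (`Q : R ⟶ R`, `P : S ⟶ S`)
with respect to a (candidate) dual pair `(M, Mv, η, ε)`, relative to a shadow: the composite
`⟦Q⟧ ≅ ⟦Q ⊙ U_R⟧ → ⟦Q ⊙ (M ⊙ M∨)⟧ ≅ ⟦(Q ⊙ M) ⊙ M∨⟧ → ⟦(M ⊙ P) ⊙ M∨⟧ ≅θ ⟦M∨ ⊙ (M ⊙ P)⟧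
≅ ⟦(M∨ ⊙ M) ⊙ P⟧ → ⟦U_S ⊙ P⟧ ≅ ⟦P⟧`. -/
def btrace {B : Type u} [Bicategory.{w, v} B] {V : Type u₁} [Category.{v₁} V]
    (sh : Shadow B V) {R S : B} (D : BicatDualData R S) {Q : R ⟶ R} {P : S ⟶ S}
    (f : Q ≫ D.M ⟶ D.M ≫ P) : (sh.sh R).obj Q ⟶ (sh.sh S).obj P :=
  (sh.sh R).map ((ρ_ Q).inv ≫ (Q ◁ D.η) ≫ (α_ Q D.M D.Mv).inv ≫ (f ▷ D.Mv)) ≫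
    (sh.θ (D.M ≫ P) D.Mv).hom ≫
    (sh.sh S).map ((α_ D.Mv D.M P).inv ≫ (D.ε' ▷ P) ≫ (λ_ P).hom)

/-- The composite duality data on `(M ⊙ N, N∨ ⊙ M∨)` arising from dual pairs `(M, M∨)` and
`(N, N∨)`: its coevaluation is `η_M` followed by whiskering with `η_N`, and its evaluation
is whiskering with `ε_M` followed by `ε_N` (associators and unitors inserted as needed). -/
abbrev compDualData {B : Type u} [Bicategory.{w, v} B] {R S T : B}
    (DM : BicatDualData R S) (DN : BicatDualData S T) : BicatDualData R T where
  M := DM.M ≫ DN.M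
  Mv := DN.Mv ≫ DM.Mv
  η := DM.η ≫
    (DM.M ◁ ((λ_ DM.Mv).inv ≫ (DN.η ▷ DM.Mv) ≫ (α_ DN.M DN.Mv DM.Mv).hom)) ≫
    (α_ DM.M DN.M (DN.Mv ≫ DM.Mv)).inv
  ε' := (α_ DN.Mv DM.Mv (DM.M ≫ DN.M)).hom ≫
    (DN.Mv ◁ ((α_ DM.Mv DM.M DN.M).inv ≫ (DM.ε' ▷ DN.M) ≫ (λ_ DN.M).hom)) ≫ DN.ε'

/-!
Using the hexagon and unit axioms, each trace can be rewritten with the symmetry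
`θ_{M, P ⊙ M∨}` in place of `θ_{M ⊙ P, M∨}`. For the composite dual pair the hexagon then splits
`θ_{M ⊙ N, L ⊙ N∨ ⊙ M∨}` into `θ_M` followed by `θ_N`. Naturality of `θ` moves the coevaluation
of `N` (together with `g`) to the far side of `θ_M` and the evaluation of `M` to the near side
of `θ_N`; the interchange law then turns what sits between `θ_M` and `θ_N` into the evaluation
part of `tr(f)` followed by the coevaluation part of `tr(g)`.
-/

namespace BicatDualData

variable {B : Type u} [Bicategory.{w, v} B] {R S : B} (D : BicatDualData R S)

def coevComp {Q : R ⟶ R} {P : S ⟶ S} (f : Q ≫ D.M ⟶ D.M ≫ P) : Q ⟶ D.M ≫ (P ≫ D.Mv) :=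
  (ρ_ Q).inv ≫ Q ◁ D.η ≫ (α_ Q D.M D.Mv).inv ≫ f ▷ D.Mv ≫ (α_ D.M P D.Mv).hom

def whiskerEv {T : B} (X : T ⟶ S) : (X ≫ D.Mv) ≫ D.M ⟶ X :=
  (α_ X D.Mv D.M).hom ≫ X ◁ D.ε' ≫ (ρ_ X).hom

lemma whiskerEv_naturality {T : B} {X Y : T ⟶ S} (u : X ⟶ Y) :
    (u ▷ D.Mv) ▷ D.M ≫ D.whiskerEv Y = D.whiskerEv X ≫ u := by
  rw [whiskerEv, associator_naturality_left_assoc, ← whisker_exchange_assoc,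
    rightUnitor_naturality, whiskerEv, assoc, assoc]

lemma whiskerEv_naturality_comp {T T' : B} {P : S ⟶ S} {N : S ⟶ T} {L : T ⟶ T'} {Nv : T' ⟶ S}
    (u : P ⟶ N ≫ (L ≫ Nv)) :
    (u ▷ D.Mv ≫ (α_ N (L ≫ Nv) D.Mv).hom ≫ N ◁ (α_ L Nv D.Mv).hom) ▷ D.M ≫
        (α_ N (L ≫ (Nv ≫ D.Mv)) D.M).hom ≫ N ◁ ((α_ L Nv D.Mv).inv ▷ D.M ≫ D.whiskerEv (L ≫ Nv))
      = D.whiskerEv P ≫ u := by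
  rw [← D.whiskerEv_naturality]
  simp only [whiskerEv]
  bicategory

section Composite

variable {T : B} (DM : BicatDualData R S) (DN : BicatDualData S T)

lemma coevComp_compDualData {Q : R ⟶ R} {P : S ⟶ S} {L : T ⟶ T}
    (f : Q ≫ DM.M ⟶ DM.M ≫ P) (g : P ≫ DN.M ⟶ DN.M ≫ L) :
    (compDualData DM DN).coevComp ((α_ Q DM.M DN.M).inv ≫ f ▷ DN.M ≫ (α_ DM.M P DN.M).hom ≫
        DM.M ◁ g ≫ (α_ DM.M DN.M L).inv)
      = DM.coevComp f ≫ DM.M ◁ (DN.coevComp g ▷ DM.Mv ≫ (α_ DN.M (L ≫ DN.Mv) DM.Mv).hom ≫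
          DN.M ◁ (α_ L DN.Mv DM.Mv).hom) ≫ (α_ DM.M DN.M (L ≫ (DN.Mv ≫ DM.Mv))).inv := by
  simp only [coevComp]
  calc _ = (ρ_ Q).inv ≫ Q ◁ DM.η ⊗≫
        ((Q ≫ DM.M) ◁ (DN.η ▷ DM.Mv) ≫ f ▷ ((DN.M ≫ DN.Mv) ≫ DM.Mv)) ⊗≫
        DM.M ◁ ((g ▷ DN.Mv) ▷ DM.Mv) ⊗≫ 𝟙 ((DM.M ≫ DN.M) ≫ (L ≫ (DN.Mv ≫ DM.Mv))) := by
        bicategory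
    _ = _ := by rw [whisker_exchange]; bicategory

lemma whiskerEv_compDualData (L : T ⟶ T) :
    (compDualData DM DN).whiskerEv L
      = (α_ (L ≫ (DN.Mv ≫ DM.Mv)) DM.M DN.M).inv ≫
          ((α_ L DN.Mv DM.Mv).inv ▷ DM.M ≫ DM.whiskerEv (L ≫ DN.Mv)) ▷ DN.M ≫
          DN.whiskerEv L := by
  simp only [whiskerEv]
  bicategory

end Composite

end BicatDualData

namespace Shadow

variable {B : Type u} [Bicategory.{w, v} B] {V : Type u₁} [Category.{v₁} V] (sh : Shadow B V)

lemma θ_hom_naturality_right {R S : B} (M : R ⟶ S) {N N' : S ⟶ R} (v : N ⟶ N') :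
    (sh.sh R).map (M ◁ v) ≫ (sh.θ M N').hom = (sh.θ M N).hom ≫ (sh.sh S).map (v ▷ M) := by
  simpa using sh.θ_natural (𝟙 M) v

lemma θ_id_hom {R : B} (M : R ⟶ R) :
    (sh.θ M (𝟙 R)).hom = (sh.sh R).map (ρ_ M).hom ≫ (sh.sh R).map (λ_ M).inv := by
  rw [← cancel_mono ((sh.sh R).map (λ_ M).hom), assoc, ← Functor.map_comp]
  simp [sh.unit_right M]

lemma θ_hom_map_whiskerRight_leftUnitor {S : B} (P : S ⟶ S) {W : S ⟶ S} (e : W ⟶ 𝟙 S) :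
    (sh.θ P W).hom ≫ (sh.sh S).map (e ▷ P ≫ (λ_ P).hom)
      = (sh.sh S).map (P ◁ e ≫ (ρ_ P).hom) := by
  rw [Functor.map_comp, ← assoc, ← sh.θ_hom_naturality_right P e, sh.θ_id_hom, Functor.map_comp]
  simp [← Functor.map_comp]

lemma θ_comp_hom {R S T : B} (M : R ⟶ S) (N : S ⟶ T) (P : T ⟶ R) :
    (sh.θ (M ≫ N) P).hom = (sh.sh R).map (α_ M N P).hom ≫ (sh.θ M (N ≫ P)).hom ≫
      (sh.sh S).map (α_ N P M).hom ≫ (sh.θ N (P ≫ M)).hom ≫ (sh.sh T).map (α_ P M N).hom := by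
  rw [← cancel_mono ((sh.sh T).map (α_ P M N).inv), sh.hexagon M N P]
  simp [← Functor.map_comp]

lemma θ_comp_hom_conj {R S T : B} {M : R ⟶ S} {N : S ⟶ T} {K : T ⟶ R} {P : S ⟶ R}
    {L : T ⟶ S} (G : P ⟶ N ≫ K) (H : K ≫ M ⟶ L) :
    (sh.sh R).map (M ◁ G ≫ (α_ M N K).inv) ≫ (sh.θ (M ≫ N) K).hom ≫
        (sh.sh T).map ((α_ K M N).inv ≫ H ▷ N)
      = (sh.θ M P).hom ≫ (sh.sh S).map (G ▷ M ≫ (α_ N K M).hom ≫ N ◁ H) ≫ (sh.θ N L).hom := by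
  rw [θ_comp_hom]
  simp only [Functor.map_comp, assoc, Iso.map_inv_hom_id_assoc, Iso.map_hom_inv_id_assoc,
    ← sh.θ_hom_naturality_right]
  rw [reassoc_of% sh.θ_hom_naturality_right M G]

lemma btrace_eq_coevComp {R S : B} (D : BicatDualData R S) {Q : R ⟶ R} {P : S ⟶ S}
    (f : Q ≫ D.M ⟶ D.M ≫ P) :
    btrace sh D f
      = (sh.sh R).map (D.coevComp f) ≫ (sh.θ D.M (P ≫ D.Mv)).hom ≫
          (sh.sh S).map (D.whiskerEv P) := by
  have h := sh.θ_hom_map_whiskerRight_leftUnitor P D.ε'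
  simp only [Functor.map_comp] at h
  simp only [btrace, sh.θ_comp_hom D.M P D.Mv, BicatDualData.coevComp, BicatDualData.whiskerEv,
    Functor.map_comp, assoc, Iso.map_hom_inv_id_assoc, h]

end Shadow

theorem btrace_multiplicative_general {B : Type u} [Bicategory.{w, v} B] {V : Type u₁}
    [Category.{v₁} V] (sh : Shadow B V) {R S T : B}
    (DM : BicatDualData R S) (DN : BicatDualData S T)
    {Q : R ⟶ R} {P : S ⟶ S} {L : T ⟶ T}
    (f : Q ≫ DM.M ⟶ DM.M ≫ P) (g : P ≫ DN.M ⟶ DN.M ≫ L) :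
    btrace sh (compDualData DM DN)
        ((α_ Q DM.M DN.M).inv ≫ (f ▷ DN.M) ≫ (α_ DM.M P DN.M).hom ≫ (DM.M ◁ g) ≫
          (α_ DM.M DN.M L).inv)
      = btrace sh DM f ≫ btrace sh DN g := by
  simp only [sh.btrace_eq_coevComp, DM.coevComp_compDualData, DM.whiskerEv_compDualData,
    Functor.map_comp, assoc]
  rw [← (sh.sh R).map_comp_assoc (DM.M ◁ _), ← (sh.sh T).map_comp_assoc,
    reassoc_of% sh.θ_comp_hom_conj, DM.whiskerEv_naturality_comp, Functor.map_comp, assoc]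

/-- Multiplicativity of the bicategorical trace: with `f : Q ⊙ M ⟶ M ⊙ P` and
`g : P ⊙ N ⟶ N ⊙ L`, and `M ⊙ N` made right dualizable with dual `N∨ ⊙ M∨` as above,
`tr((id_M ⊙ g) ∘ (f ⊙ id_N)) = tr(g) ∘ tr(f) : ⟦Q⟧ ⟶ ⟦L⟧`. -/
theorem btrace_multiplicative {B : Type u} [Bicategory.{w, v} B] {V : Type u₁}
    [Category.{v₁} V] (sh : Shadow B V) {R S T : B}
    (DM : BicatDualData R S) (DN : BicatDualData S T)
    (hM : DM.IsDualPair) (hN : DN.IsDualPair)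
    {Q : R ⟶ R} {P : S ⟶ S} {L : T ⟶ T}
    (f : Q ≫ DM.M ⟶ DM.M ≫ P) (g : P ≫ DN.M ⟶ DN.M ≫ L) :
    btrace sh (compDualData DM DN)
        ((α_ Q DM.M DN.M).inv ≫ (f ▷ DN.M) ≫ (α_ DM.M P DN.M).hom ≫ (DM.M ◁ g) ≫
          (α_ DM.M DN.M L).inv)
      = btrace sh DM f ≫ btrace sh DN g :=
  btrace_multiplicative_general sh DM DN f g
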